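/- The five-element lattice N5, with its unique antitone involution (0' = 1, a' = b, b' = a, c' = c, 1' = 0), cannot be equipped with operations ⊙, → making (N5, ≤, ⊙, →, 1) a residuated poset satisfying x' = x → 0 for all x. -/

import Mathlib

/-! In a residuated poset with top `e = 1`, `x ⊙ y` lies below both `x` and `y`. In `N5` the
only common lower bound of `a` and `c` is `0`, so `a ⊙ c = 0` and adjointness gives
`a ≤ c → 0 = c' = c`, which fails since `a` and `c` are incomparable. -/

inductive N5 where
  | z | a | b | c | o
deriving DecidableEq

instance : Fintype N5 where
  elems := {.z, .a, .b, .c, .o}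
  complete := by intro x; cases x <;> decide

namespace N5

/-- The order of N5: 0 < a < b < 1, c incomparable with a and b. -/
def leb : N5 → N5 → Bool
  | .z, _ => true
  | _, .o => true
  | .a, .a => true
  | .a, .b => true
  | .b, .b => true
  | .c, .c => true
  | _, _ => false

instance : LE N5 := ⟨fun x y => leb x y = true⟩

instance : DecidableRel (α := N5) (· ≤ ·) :=
  fun x y => inferInstanceAs (Decidable (leb x y = true))

instance : PartialOrder N5 where
  le := (· ≤ ·)
  le_refl := by decide
  le_trans := by decide
  le_antisymm := by decide

/-- The involution 0' = 1, a' = b, b' = a, c' = c, 1' = 0. -/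
def inv : N5 → N5
  | .z => .o
  | .a => .b
  | .b => .a
  | .c => .c
  | .o => .z

end N5

section ResiduatedPoset

variable {α : Type*} [PartialOrder α] {mul imp : α → α → α} {e : α}

theorem mul_le_mul_right_of_adjoint (hadj : ∀ x y z, mul x y ≤ z ↔ x ≤ imp y z)
    {x y : α} (hxy : x ≤ y) (z : α) : mul x z ≤ mul y z :=
  (hadj x z _).2 (hxy.trans ((hadj y z _).1 le_rfl))

theorem mul_le_right_of_adjoint (hcomm : ∀ x y, mul x y = mul y x)
    (hadj : ∀ x y z, mul x y ≤ z ↔ x ≤ imp y z) (he : ∀ x, x ≤ e) (hone : ∀ x, mul x e = x)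
    (x y : α) : mul x y ≤ y :=
  calc mul x y ≤ mul e y := mul_le_mul_right_of_adjoint hadj (he x) y
    _ = y := by rw [hcomm, hone]

theorem le_imp_of_forall_le_of_le (hcomm : ∀ x y, mul x y = mul y x)
    (hadj : ∀ x y z, mul x y ≤ z ↔ x ≤ imp y z) (he : ∀ x, x ≤ e) (hone : ∀ x, mul x e = x)
    {x y z : α} (hz : ∀ w, w ≤ x → w ≤ y → w ≤ z) : x ≤ imp y z := by
  refine (hadj x y z).1 (hz _ ?_ (mul_le_right_of_adjoint hcomm hadj he hone x y))
  rw [hcomm]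
  exact mul_le_right_of_adjoint hcomm hadj he hone y x

end ResiduatedPoset

/-- N5 with its unique antitone involution cannot be made into a residuated
poset (N5, ≤, ⊙, →, 1) satisfying x' = x → 0. -/
theorem stmt4 : ¬ ∃ (mul imp : N5 → N5 → N5),
    (∀ x y : N5, mul x y = mul y x) ∧
    (∀ x y z : N5, mul (mul x y) z = mul x (mul y z)) ∧
    (∀ x : N5, mul x .o = x) ∧
    (∀ x y z : N5, mul x y ≤ z ↔ x ≤ imp y z) ∧
    (∀ x : N5, imp x .z = N5.inv x) := by
  rintro ⟨mul, imp, hcomm, -, hone, hadj, hinv⟩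
  have ha_le_c : N5.a ≤ imp .c .z :=
    le_imp_of_forall_le_of_le hcomm hadj (e := .o) (by decide) hone (by decide)
  rw [hinv] at ha_le_c
  exact absurd ha_le_c (by decide)
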